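/- (Strict Monotonicity for Interior Solutions) Under the setting of the Structural Shift theorem — with 𝓜(α; ζ) = B₀ n^{−2β} α^{−2β} + Σ_{c=1}^{M} ζ_c H_c(α), H_c(α) = (α^c/c!) ∏_{j=0}^{c−1}(αn − j), and ζ⁽²⁾ dominating ζ⁽¹⁾ in the high-order sense (equal below c*, ≥ at or above c*, strictly greater for at least one c ≥ c*) — if α*₁ minimizes 𝓜(·; ζ⁽¹⁾) over [M/n, 1], α*₂ minimizes 𝓜(·; ζ⁽²⁾) over [M/n, 1], and both minimizers lie in the open interval (M/n, 1), then the inequality is strict: α*₂ < α*₁. -/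

import Mathlib

/-!
The difference `𝓜(·; ζ⁽²⁾) - 𝓜(·; ζ⁽¹⁾) = Σ_c (ζ⁽²⁾_c - ζ⁽¹⁾_c) H_c` has positive derivative
wherever `αn ≥ M`: writing `H_c(α) = (1/c!) ∏_{j<c} α(αn - j)`, every factor is positive with
positive derivative. So the difference is strictly increasing, and the exchange argument
(add the two minimality inequalities at the swapped points) gives `α*₂ ≤ α*₁`. A common interior
minimizer would be a critical point of both envelopes, hence of their difference, which is
impossible.
-/

/-- The continuous extension `H_c(α) = (α^c/c!) ∏_{j=0}^{c−1} (αn − j)` of the `c`-th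
order variance inflation multiplier of subagging. -/
noncomputable def Hmul (n c : ℕ) (α : ℝ) : ℝ :=
  α ^ c / (Nat.factorial c : ℝ) * ∏ j ∈ Finset.range c, (α * n - j)

/-- The continuous finite-sample MSE envelope
`𝓜(α; ζ) = B₀ n^{−2β} α^{−2β} + Σ_{c=1}^{M} ζ_c H_c(α)`. -/
noncomputable def Menv (n M : ℕ) (B₀ β : ℝ) (ζ : ℕ → ℝ) (α : ℝ) : ℝ :=
  B₀ * (n : ℝ) ^ (-(2 * β)) * α ^ (-(2 * β)) + ∑ c ∈ Finset.Icc 1 M, ζ c * Hmul n c α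

open Finset

theorem deriv_finsetProd_pos {ι : Type*} {s : Finset ι} (hs : s.Nonempty) {f : ι → ℝ → ℝ}
    {f' : ι → ℝ} {x : ℝ} (hf : ∀ i ∈ s, HasDerivAt (f i) (f' i) x)
    (hpos : ∀ i ∈ s, 0 < f i x) (hpos' : ∀ i ∈ s, 0 < f' i) :
    0 < deriv (∏ i ∈ s, f i ·) x := by
  classical
  rw [(HasDerivAt.fun_finsetProd hf).deriv]
  exact sum_pos (fun i hi => smul_pos (prod_pos fun j hj => hpos j (mem_of_mem_erase hj))
    (hpos' i hi)) hs

theorem le_of_isMinOn_of_strictMonoOn_sub {α β : Type*} [LinearOrder α] [AddCommGroup β]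
    [LinearOrder β] [IsOrderedAddMonoid β] {f g : α → β} {s : Set α} {a b : α}
    (ha : a ∈ s) (hb : b ∈ s) (hf : IsMinOn f s a) (hg : IsMinOn g s b)
    (hgf : StrictMonoOn (fun x => g x - f x) s) : b ≤ a := by
  by_contra! hab
  exact (hgf ha hb hab).not_ge (sub_le_sub (hg ha) (hf hb))

theorem deriv_sub_eq_zero_of_isLocalMin {f g : ℝ → ℝ} {x : ℝ} (hf : IsLocalMin f x)
    (hg : IsLocalMin g x) (hf' : DifferentiableAt ℝ f x) (hg' : DifferentiableAt ℝ g x) :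
    deriv (fun y => g y - f y) x = 0 := by
  rw [deriv_fun_sub hg' hf', hg.deriv_eq_zero, hf.deriv_eq_zero, sub_zero]

theorem Hmul_eq_prod (n c : ℕ) :
    Hmul n c = fun α : ℝ => (∏ j ∈ range c, α * (α * n - j)) / (c.factorial : ℝ) := by
  ext α
  rw [Hmul, prod_mul_distrib, prod_const, card_range]
  ring

@[fun_prop]
theorem differentiable_Hmul (n c : ℕ) : Differentiable ℝ (Hmul n c) := by
  rw [Hmul_eq_prod]
  fun_prop

theorem deriv_Hmul_pos {n c : ℕ} (hc : 1 ≤ c) {α : ℝ} (hcα : c ≤ α * n) :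
    0 < deriv (Hmul n c) α := by
  have hαn : 0 < α * n := by
    have : (1 : ℝ) ≤ c := by exact_mod_cast hc
    linarith
  have hα : 0 < α := pos_of_mul_pos_left hαn (Nat.cast_nonneg n)
  have hfac : ∀ j ∈ range c, 0 < α * n - j := fun j hj => by
    have : (j : ℝ) < c := by exact_mod_cast mem_range.mp hj
    linarith
  have hderiv (j : ℕ) : HasDerivAt (fun x : ℝ => x * (x * n - j)) (α * n - j + α * n) α := by
    simpa using
      (hasDerivAt_id' α).fun_mul (((hasDerivAt_id' α).mul_const (n : ℝ)).sub_const (j : ℝ))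
  rw [Hmul_eq_prod, deriv_div_const]
  refine div_pos (deriv_finsetProd_pos (nonempty_range_iff.mpr (by omega)) (fun j _ => hderiv j)
    (fun j hj => mul_pos hα (hfac j hj)) fun j hj => ?_) (by positivity)
  linarith [hfac j hj]

theorem differentiableAt_Menv (n M : ℕ) (B₀ β : ℝ) (ζ : ℕ → ℝ) {α : ℝ} (hα : α ≠ 0) :
    DifferentiableAt ℝ (Menv n M B₀ β ζ) α := by
  unfold Menv
  fun_prop (disch := exact Or.inl hα)

theorem Menv_sub_Menv (n M : ℕ) (B₀ β : ℝ) (ζ₁ ζ₂ : ℕ → ℝ) :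
    (fun α => Menv n M B₀ β ζ₂ α - Menv n M B₀ β ζ₁ α) =
      fun α => ∑ c ∈ Icc 1 M, (ζ₂ c - ζ₁ c) * Hmul n c α := by
  ext α
  simp only [Menv, sub_mul, sum_sub_distrib]
  ring

section WeightedSum

variable {n M : ℕ} {w : ℕ → ℝ}

theorem deriv_sum_Hmul_pos (hw : ∀ c ∈ Icc 1 M, 0 ≤ w c) (hw₀ : ∃ c ∈ Icc 1 M, 0 < w c)
    {α : ℝ} (hα : M ≤ α * n) : 0 < deriv (fun α => ∑ c ∈ Icc 1 M, w c * Hmul n c α) α := by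
  rw [deriv_fun_sum fun c _ => ((differentiable_Hmul n c) α).const_mul (w c)]
  have hHmul : ∀ c ∈ Icc 1 M, 0 < deriv (Hmul n c) α := fun c hc => by
    obtain ⟨hc1, hcM⟩ := mem_Icc.mp hc
    exact deriv_Hmul_pos hc1 (le_trans (by exact_mod_cast hcM) hα)
  simp_rw [deriv_const_mul _ (differentiable_Hmul n _ α)]
  obtain ⟨c₀, hc₀, hw₀⟩ := hw₀
  exact sum_pos' (fun c hc => mul_nonneg (hw c hc) (hHmul c hc).le)
    ⟨c₀, hc₀, mul_pos hw₀ (hHmul c₀ hc₀)⟩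

theorem strictMonoOn_sum_Hmul (hn : 0 < n) (hw : ∀ c ∈ Icc 1 M, 0 ≤ w c)
    (hw₀ : ∃ c ∈ Icc 1 M, 0 < w c) :
    StrictMonoOn (fun α => ∑ c ∈ Icc 1 M, w c * Hmul n c α) (Set.Ici ((M : ℝ) / n)) := by
  refine strictMonoOn_of_deriv_pos (convex_Ici _) ?_ fun α hα => deriv_sum_Hmul_pos hw hw₀ ?_
  · exact (Differentiable.continuous (by fun_prop)).continuousOn
  · rw [interior_Ici] at hα
    exact (div_le_iff₀ (by exact_mod_cast hn)).mp hα.le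

end WeightedSum

theorem strict_monotonicity_interior_solutions_general (n M : ℕ)
    (hn : 1 ≤ n)
    (B₀ β : ℝ)
    (ζ₁ ζ₂ : ℕ → ℝ)
    (cstar : ℕ)
    (hlow : ∀ c, 1 ≤ c → c ≤ M → c < cstar → ζ₂ c = ζ₁ c)
    (hhigh : ∀ c, 1 ≤ c → c ≤ M → cstar ≤ c → ζ₁ c ≤ ζ₂ c)
    (hstrict : ∃ c, 1 ≤ c ∧ c ≤ M ∧ cstar ≤ c ∧ ζ₁ c < ζ₂ c)
    (α₁ α₂ : ℝ)
    (hα₁min : ∀ α ∈ Set.Icc ((M : ℝ) / n) 1, Menv n M B₀ β ζ₁ α₁ ≤ Menv n M B₀ β ζ₁ α)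
    (hα₂min : ∀ α ∈ Set.Icc ((M : ℝ) / n) 1, Menv n M B₀ β ζ₂ α₂ ≤ Menv n M B₀ β ζ₂ α)
    (hα₁int : α₁ ∈ Set.Ioo ((M : ℝ) / n) 1)
    (hα₂int : α₂ ∈ Set.Ioo ((M : ℝ) / n) 1) :
    α₂ < α₁ := by
  have hw : ∀ c ∈ Icc 1 M, 0 ≤ ζ₂ c - ζ₁ c := fun c hc => by
    obtain ⟨hc1, hcM⟩ := mem_Icc.mp hc
    rcases lt_or_ge c cstar with hlt | hge
    · rw [hlow c hc1 hcM hlt, sub_self]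
    · exact sub_nonneg.mpr (hhigh c hc1 hcM hge)
  have hw₀ : ∃ c ∈ Icc 1 M, 0 < ζ₂ c - ζ₁ c := by
    obtain ⟨c, hc1, hcM, -, hlt⟩ := hstrict
    exact ⟨c, mem_Icc.mpr ⟨hc1, hcM⟩, sub_pos.mpr hlt⟩
  have hmin₁ : IsMinOn (Menv n M B₀ β ζ₁) (Set.Icc ((M : ℝ) / n) 1) α₁ := hα₁min
  have hmin₂ : IsMinOn (Menv n M B₀ β ζ₂) (Set.Icc ((M : ℝ) / n) 1) α₂ := hα₂min
  have hle : α₂ ≤ α₁ := by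
    refine le_of_isMinOn_of_strictMonoOn_sub (Set.Ioo_subset_Icc_self hα₁int)
      (Set.Ioo_subset_Icc_self hα₂int) hmin₁ hmin₂ ?_
    rw [Menv_sub_Menv]
    exact (strictMonoOn_sum_Hmul hn hw hw₀).mono Set.Icc_subset_Ici_self
  refine hle.lt_of_ne fun heq => ?_
  subst heq
  have hα : 0 < α₂ := lt_of_le_of_lt (by positivity) hα₂int.1
  have hnhds := Icc_mem_nhds hα₂int.1 hα₂int.2
  have hcrit := deriv_sub_eq_zero_of_isLocalMin (hmin₁.isLocalMin hnhds) (hmin₂.isLocalMin hnhds)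
    (differentiableAt_Menv n M B₀ β ζ₁ hα.ne') (differentiableAt_Menv n M B₀ β ζ₂ hα.ne')
  have hαM : (M : ℝ) ≤ α₂ * n := (div_le_iff₀ (by exact_mod_cast hn)).mp hα₂int.1.le
  rw [Menv_sub_Menv] at hcrit
  exact (deriv_sum_Hmul_pos hw hw₀ hαM).ne' hcrit

/-- **Strict Monotonicity for Interior Solutions.**
Under the setting of the Structural Shift theorem, if the nonnegative spectrum `ζ⁽²⁾`
dominates `ζ⁽¹⁾` in the high-order sense, `α*₁`, `α*₂` are minimizers of `𝓜(·; ζ⁽¹⁾)`,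
`𝓜(·; ζ⁽²⁾)` over `[M/n, 1]`, and both minimizers lie in the open interval `(M/n, 1)`,
then the inequality is strict: `α*₂ < α*₁`. -/
theorem strict_monotonicity_interior_solutions (n M : ℕ)
    (hn : 1 ≤ n) (hM : 1 ≤ M) (hMn : M ≤ n)
    (B₀ β : ℝ) (hB₀ : 0 < B₀) (hβ : 0 < β)
    (ζ₁ ζ₂ : ℕ → ℝ) (hζ₁ : ∀ c, 0 ≤ ζ₁ c) (hζ₂ : ∀ c, 0 ≤ ζ₂ c)
    (cstar : ℕ)
    (hlow : ∀ c, 1 ≤ c → c ≤ M → c < cstar → ζ₂ c = ζ₁ c)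
    (hhigh : ∀ c, 1 ≤ c → c ≤ M → cstar ≤ c → ζ₁ c ≤ ζ₂ c)
    (hstrict : ∃ c, 1 ≤ c ∧ c ≤ M ∧ cstar ≤ c ∧ ζ₁ c < ζ₂ c)
    (α₁ α₂ : ℝ)
    (hα₁mem : α₁ ∈ Set.Icc ((M : ℝ) / n) 1)
    (hα₂mem : α₂ ∈ Set.Icc ((M : ℝ) / n) 1)
    (hα₁min : ∀ α ∈ Set.Icc ((M : ℝ) / n) 1, Menv n M B₀ β ζ₁ α₁ ≤ Menv n M B₀ β ζ₁ α)
    (hα₂min : ∀ α ∈ Set.Icc ((M : ℝ) / n) 1, Menv n M B₀ β ζ₂ α₂ ≤ Menv n M B₀ β ζ₂ α)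
    (hα₁int : α₁ ∈ Set.Ioo ((M : ℝ) / n) 1)
    (hα₂int : α₂ ∈ Set.Ioo ((M : ℝ) / n) 1) :
    α₂ < α₁ :=
  strict_monotonicity_interior_solutions_general n M hn B₀ β ζ₁ ζ₂ cstar hlow hhigh hstrict α₁ α₂
    hα₁min hα₂min hα₁int hα₂int
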